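/- arXiv:1310.1630 — 3 statements merged into one kernel-verified Lean document; each statement's English description precedes it below -/
import Mathlib

section
/- Let Y_1, Y_2, … be i.i.d. real random variables whose distribution function F is absolutely continuous with a unique quantile inverse Q on (0,1), with E[Y_1] = 0, E[Y_1²] = 1 and E[|Y_1|^{2+ε}] < ∞ for some ε > 0. Then (1/√n) E[Y_(n) − Y_(1)] → 0 as n → ∞, where Y_(1) = min_{1≤i≤n} Y_i and Y_(n) = max_{1≤i≤n} Y_i. -/
/-! Put `q = 2 + ε` and `t = n^(1/q)`. Truncating at level `t` gives
`|Y_i| ≤ t + ∑_j |Y_j|^q / t^(q-1)` for every `i ≤ n`, so taking expectations bounds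
`E[Y_(n) - Y_(1)]` by `2 (t + n E|Y|^q / t^(q-1)) = 2 (1 + E|Y|^q) n^(1/q)`, which is
`o(√n)` because `q > 2`. -/

open MeasureTheory ProbabilityTheory Filter Set

lemma abs_le_add_rpow_div_rpow {a t q : ℝ} (ht : 0 < t) (hq : 1 ≤ q) :
    |a| ≤ t + |a| ^ q / t ^ (q - 1) := by
  rcases le_or_gt |a| t with hat | hta
  · have : 0 ≤ |a| ^ q / t ^ (q - 1) := by positivity
    linarith
  · have ha : 0 < |a| := ht.trans hta
    have hsplit : |a| ^ q = |a| * |a| ^ (q - 1) := by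
      rw [← Real.rpow_one_add' ha.le (by linarith)]
      ring_nf
    calc |a| = |a| * t ^ (q - 1) / t ^ (q - 1) := by field_simp
      _ ≤ |a| ^ q / t ^ (q - 1) := by
          rw [hsplit]; gcongr
      _ ≤ t + |a| ^ q / t ^ (q - 1) := le_add_of_nonneg_left ht.le

section FiniteFamily

variable {ι : Type*} (x : ι → ℝ)

lemma iSup_sub_iInf_nonneg [Finite ι] [Nonempty ι] : 0 ≤ (⨆ i, x i) - ⨅ i, x i :=
  sub_nonneg.2 (ciInf_le_ciSup (Finite.bddBelow_range x) (Finite.bddAbove_range x))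

lemma iSup_sub_iInf_le_two_mul [Nonempty ι] {B : ℝ} (h : ∀ i, |x i| ≤ B) :
    (⨆ i, x i) - ⨅ i, x i ≤ 2 * B := by
  have hsup : (⨆ i, x i) ≤ B := ciSup_le fun i => (le_abs_self _).trans (h i)
  have hinf : -B ≤ ⨅ i, x i := le_ciInf fun i => neg_le.1 ((neg_le_abs _).trans (h i))
  linarith

lemma abs_le_add_sum_rpow_div_rpow [Fintype ι] {t q : ℝ} (ht : 0 < t) (hq : 1 ≤ q) (i : ι) :
    |x i| ≤ t + (∑ j, |x j| ^ q) / t ^ (q - 1) := by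
  refine (abs_le_add_rpow_div_rpow ht hq).trans ?_
  gcongr
  exact Finset.single_le_sum (f := fun j => |x j| ^ q) (fun j _ => by positivity)
    (Finset.mem_univ i)

end FiniteFamily

section SampleRange

variable {Ω ι : Type*} [MeasurableSpace Ω] {P : Measure Ω} {X : ι → Ω → ℝ} {μ : Measure ℝ}

lemma integral_abs_rpow_eq (hX : ∀ i, Measurable (X i)) (hlaw : ∀ i, P.map (X i) = μ)
    (q : ℝ) (i : ι) : ∫ ω, |X i ω| ^ q ∂P = ∫ x, |x| ^ q ∂μ := by
  rw [← hlaw i, integral_map (hX i).aemeasurable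
    (by fun_prop : Measurable fun x : ℝ => |x| ^ q).aestronglyMeasurable]

lemma integrable_abs_rpow (hX : ∀ i, Measurable (X i)) (hlaw : ∀ i, P.map (X i) = μ)
    {q : ℝ} (hmom : Integrable (fun x => |x| ^ q) μ) (i : ι) :
    Integrable (fun ω => |X i ω| ^ q) P :=
  (integrable_map_measure (by fun_prop : Measurable fun x : ℝ => |x| ^ q).aestronglyMeasurable
    (hX i).aemeasurable).1 (by rwa [hlaw i])

lemma integral_iSup_sub_iInf_le [IsProbabilityMeasure P] [Fintype ι] [Nonempty ι]
    (hX : ∀ i, Measurable (X i)) (hlaw : ∀ i, P.map (X i) = μ)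
    {q t : ℝ} (hq : 1 ≤ q) (ht : 0 < t) (hmom : Integrable (fun x => |x| ^ q) μ) :
    ∫ ω, ((⨆ i, X i ω) - ⨅ i, X i ω) ∂P
      ≤ 2 * (t + Fintype.card ι * (∫ x, |x| ^ q ∂μ) / t ^ (q - 1)) := by
  set S : Ω → ℝ := fun ω => ∑ j, |X j ω| ^ q
  have hS : Integrable S P := integrable_finsetSum _ fun j _ => integrable_abs_rpow hX hlaw hmom j
  have hS_int : ∫ ω, S ω ∂P = Fintype.card ι * ∫ x, |x| ^ q ∂μ := by
    simp only [S, integral_finsetSum _ fun j _ => integrable_abs_rpow hX hlaw hmom j,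
      integral_abs_rpow_eq hX hlaw, Finset.sum_const, Finset.card_univ, nsmul_eq_mul]
  have hbound : ∀ ω, (⨆ i, X i ω) - ⨅ i, X i ω ≤ 2 * (t + S ω / t ^ (q - 1)) := fun ω =>
    iSup_sub_iInf_le_two_mul _ (abs_le_add_sum_rpow_div_rpow (fun i => X i ω) ht hq)
  have hbound_int : Integrable (fun ω => 2 * (t + S ω / t ^ (q - 1))) P :=
    ((integrable_const t).add (hS.div_const _)).const_mul 2
  have hrange_int : Integrable (fun ω => (⨆ i, X i ω) - ⨅ i, X i ω) P := by
    refine hbound_int.mono' (by fun_prop) (ae_of_all _ fun ω => ?_)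
    rw [Real.norm_of_nonneg (iSup_sub_iInf_nonneg _)]
    exact hbound ω
  calc ∫ ω, ((⨆ i, X i ω) - ⨅ i, X i ω) ∂P
      ≤ ∫ ω, 2 * (t + S ω / t ^ (q - 1)) ∂P := integral_mono hrange_int hbound_int hbound
    _ = 2 * (t + Fintype.card ι * (∫ x, |x| ^ q ∂μ) / t ^ (q - 1)) := by
      rw [integral_const_mul, integral_add (integrable_const t) (hS.div_const _),
        integral_const, integral_div, hS_int]
      simp

end SampleRange

lemma rpow_inv_add_mul_div_rpow_sub_one {x q : ℝ} (hx : 0 < x) (hq : q ≠ 0) (C : ℝ) :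
    x ^ (1 / q) + x * C / (x ^ (1 / q)) ^ (q - 1) = (1 + C) * x ^ (1 / q) := by
  have ht : 0 < x ^ (1 / q) := by positivity
  rw [Real.rpow_sub ht, Real.rpow_one, ← Real.rpow_mul hx.le, one_div_mul_cancel hq,
    Real.rpow_one]
  field_simp

lemma tendsto_rpow_inv_div_sqrt_atTop {q : ℝ} (hq : 2 < q) :
    Tendsto (fun n : ℕ => (n : ℝ) ^ (1 / q) / Real.sqrt n) atTop (nhds 0) := by
  have hexp : 1 / q - 1 / 2 < 0 := by
    have : 1 / q < 1 / 2 := one_div_lt_one_div_of_lt two_pos hq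
    linarith
  refine ((tendsto_rpow_neg_atTop (neg_pos.2 hexp)).comp
    tendsto_natCast_atTop_atTop).congr' ?_
  filter_upwards [eventually_gt_atTop 0] with n hn
  have hn : (0 : ℝ) < n := Nat.cast_pos.2 hn
  rw [Function.comp_apply, neg_neg, Real.rpow_sub hn, Real.sqrt_eq_rpow]

theorem stmt4_general {Ω : Type*} [MeasurableSpace Ω] (P : Measure Ω) [IsProbabilityMeasure P]
    (Y : ℕ → Ω → ℝ) (μ : Measure ℝ) (ε : ℝ)
    (hmeas : ∀ i, Measurable (Y i))
    (hdist : ∀ i, Measure.map (Y i) P = μ)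
    -- finite (2+ε)-th absolute moment
    (hε : 0 < ε)
    (hmom : Integrable (fun x => |x| ^ (2 + ε)) μ) :
    Tendsto
      (fun n : ℕ => (1 / Real.sqrt n) *
        ∫ ω, ((⨆ i : Fin n, Y (i : ℕ) ω) - ⨅ i : Fin n, Y (i : ℕ) ω) ∂P)
      atTop (nhds 0) := by
  set q := 2 + ε
  set C := ∫ x, |x| ^ q ∂μ
  have hbound := (tendsto_rpow_inv_div_sqrt_atTop (by linarith : 2 < q)).const_mul (2 * (1 + C))
  rw [mul_zero] at hbound
  refine squeeze_zero' ?_ ?_ hbound <;> filter_upwards [eventually_gt_atTop 0] with n hn <;>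
    have : Nonempty (Fin n) := ⟨⟨0, hn⟩⟩
  · exact mul_nonneg (by positivity) (integral_nonneg fun ω => iSup_sub_iInf_nonneg _)
  · have hn : (0 : ℝ) < n := Nat.cast_pos.2 hn
    have hrange := integral_iSup_sub_iInf_le (X := fun i : Fin n => Y i) (fun i => hmeas i)
      (fun i => hdist i) (by linarith : 1 ≤ q) (by positivity : 0 < (n : ℝ) ^ (1 / q)) hmom
    rw [Fintype.card_fin, rpow_inv_add_mul_div_rpow_sub_one hn (by positivity)] at hrange
    calc (1 / Real.sqrt n) * ∫ ω, ((⨆ i : Fin n, Y i ω) - ⨅ i : Fin n, Y i ω) ∂P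
        ≤ (1 / Real.sqrt n) * (2 * ((1 + C) * (n : ℝ) ^ (1 / q))) := by gcongr
      _ = 2 * (1 + C) * ((n : ℝ) ^ (1 / q) / Real.sqrt n) := by ring

/-- For i.i.d. `Y₁, Y₂, …` with absolutely continuous law, unique quantile
inverse `Q` on (0,1), mean 0, second moment 1, and a finite `(2+ε)`-th absolute moment,
`(1/√n) E[Y_(n) - Y_(1)] → 0` as `n → ∞`. -/
theorem stmt4 {Ω : Type*} [MeasurableSpace Ω] (P : Measure Ω) [IsProbabilityMeasure P]
    (Y : ℕ → Ω → ℝ) (μ : Measure ℝ) (f Q : ℝ → ℝ) (ε : ℝ)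
    (hmeas : ∀ i, Measurable (Y i))
    (hindep : iIndepFun Y P)
    (hdist : ∀ i, Measure.map (Y i) P = μ)
    -- absolutely continuous with density `f`, `Q` the unique quantile inverse on (0,1)
    (hf : ∀ x, 0 ≤ f x)
    (hdens : μ = volume.withDensity fun x => ENNReal.ofReal (f x))
    (hQF : ∀ p ∈ Ioo (0 : ℝ) 1, (μ (Iic (Q p))).toReal = p)
    (hQuniq : ∀ p ∈ Ioo (0 : ℝ) 1, ∀ x : ℝ, (μ (Iic x)).toReal = p → x = Q p)
    -- mean 0, second moment 1
    (hmean : ∫ x, x ∂μ = 0)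
    (hvar : ∫ x, x ^ 2 ∂μ = 1)
    -- finite (2+ε)-th absolute moment
    (hε : 0 < ε)
    (hmom : Integrable (fun x => |x| ^ (2 + ε)) μ) :
    Tendsto
      (fun n : ℕ => (1 / Real.sqrt n) *
        ∫ ω, ((⨆ i : Fin n, Y (i : ℕ) ω) - ⨅ i : Fin n, Y (i : ℕ) ω) ∂P)
      atTop (nhds 0) :=
  stmt4_general P Y μ ε hmeas hdist hε hmom
end

section
/- For each n, let Z_1,…,Z_n be i.i.d. standard normal random variables and let N_1,…,N_n be i.i.d. Bernoulli random variables with success probability λ/n, independent of the Z_i, where λ > 0 is fixed. Fix μ ∈ ℝ, σ > 0, h > 0, and set W_i = μ/n + (σ/√n) Z_i + h N_i for 1 ≤ i ≤ n. Let k* = #{i : N_i = 0} be the number of observations in the first (no-jump) cluster, and let G_n denote the ECF of W_1,…,W_n. Then P( G_n(k/n) ≤ 0 for every integer k with k*+1 ≤ k ≤ n−1 ) → 1 as n → ∞. -/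
open MeasureTheory ProbabilityTheory Filter Set
open scoped Classical

/-- The order statistics (1-based) of the sample `W`: `sortedOf W j` is `W_(j)`. -/
noncomputable def sortedOf {n : ℕ} (W : Fin n → ℝ) : ℕ → ℝ :=
  fun j => ((List.ofFn W).insertionSort (· ≤ ·)).getD (j - 1) 0

/-- The empirical cross-over function: `ecf n W k` is `G_n ((k-1)/n)` for `1 ≤ k ≤ n-1`. -/
noncomputable def ecf (n : ℕ) (W : Fin n → ℝ) (k : ℕ) : ℝ :=
  (1 / (k : ℝ)) * ∑ j ∈ Finset.Icc 1 k, sortedOf W j - sortedOf W k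
    + (1 / ((n : ℝ) - (k : ℝ))) * ∑ j ∈ Finset.Icc (k + 1) n, sortedOf W j
    - sortedOf W (k + 1)

/-!
Off an event of vanishing probability, every jump indicator is `0` or `1`, at most half of the
indicators are `1`, and every noise term `σ Z_i / √n` is at most `h / 16` in absolute value.
Then the sample splits into a lower cluster (no jump) below `c = μ/n + h/16` holding at least
half of the points, and an upper cluster in `[L, U] = [μ/n + 15h/16, μ/n + 17h/16]`.
For `m` beyond the lower cluster, the mean of the `m` smallest values is at most
`U - (U - c)/2 ≤ L - (U - L)`, while `W_(m) ≥ L` and the mean of the remaining values exceeds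
`W_(m+1) ≥ L` by at most `U - L`; so both halves of the ECF add up to a nonpositive number.
The exceptional event is controlled by Markov's inequality for the number of jumps (mean `λ`)
and by a union bound over Gaussian tails at level `h √n / (16 σ)`.
-/

open Finset
open scoped ENNReal NNReal Topology

theorem List.Pairwise.getElem_le_iff_lt_countP {α : Type*} [LinearOrder α] {l : List α}
    (hl : l.Pairwise (· ≤ ·)) (c : α) {i : ℕ} (hi : i < l.length) :
    l[i] ≤ c ↔ i < l.countP (· ≤ c) := by
  induction l generalizing i with
  | nil => simp at hi
  | cons a t ih =>
    obtain ⟨ha, ht⟩ := List.pairwise_cons.1 hl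
    rcases le_or_gt a c with hac | hca
    · rcases i with _ | i
      · simp [hac]
      · simpa [List.countP_cons, hac] using ih ht (by simpa using hi)
    · have hc_lt : ∀ x ∈ a :: t, c < x := fun x hx =>
        (List.mem_cons.1 hx).elim (fun h => h ▸ hca) (fun h => hca.trans_le (ha x h))
      have hcount : (a :: t).countP (· ≤ c) = 0 :=
        List.countP_eq_zero.2 fun x hx => by simpa using hc_lt x hx
      simpa [hcount] using hc_lt _ (List.getElem_mem hi)

lemma List.countP_ofFn {α : Type*} {n : ℕ} (f : Fin n → α) (p : α → Prop)
    [DecidablePred p] : (List.ofFn f).countP (p ·) = #{i | p (f i)} := by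
  rw [← Multiset.coe_countP, ← Fin.univ_val_map, Multiset.countP_map, Finset.card_def,
    Finset.filter_val]

section OrderStatistics

variable {n : ℕ} (W : Fin n → ℝ)

lemma sortedOf_eq_getElem {j : ℕ} (hj : j - 1 < n) :
    sortedOf W j = ((List.ofFn W).insertionSort (· ≤ ·))[j - 1]'(by simpa using hj) :=
  List.getD_eq_getElem _ _ _

lemma sortedOf_of_lt {j : ℕ} (hj : n < j) : sortedOf W j = 0 :=
  List.getD_eq_default _ _ (by simp; omega)

lemma exists_sortedOf_eq {j : ℕ} (hj : j - 1 < n) : ∃ i, sortedOf W j = W i := by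
  rw [sortedOf_eq_getElem W hj]
  obtain ⟨i, hi⟩ := List.mem_ofFn.1
    ((List.perm_insertionSort (· ≤ ·) (List.ofFn W)).mem_iff.1 (List.getElem_mem _))
  exact ⟨i, hi.symm⟩

lemma sortedOf_le_iff (c : ℝ) {j : ℕ} (hj₀ : 1 ≤ j) (hj : j ≤ n) :
    sortedOf W j ≤ c ↔ j ≤ #{i | W i ≤ c} := by
  rw [sortedOf_eq_getElem W (by omega),
    (List.pairwise_insertionSort _ _).getElem_le_iff_lt_countP,
    (List.perm_insertionSort _ _).countP_eq, List.countP_ofFn]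
  omega

end OrderStatistics

section TwoClusters

variable {n : ℕ} {W : Fin n → ℝ} {c L U : ℝ}

lemma sortedOf_le_of_forall_le (hU : ∀ i, W i ≤ U) {j : ℕ} (hj : j - 1 < n) :
    sortedOf W j ≤ U := by
  obtain ⟨i, hi⟩ := exists_sortedOf_eq W hj
  exact hi ▸ hU i

lemma le_sortedOf_of_card_lt (hW : ∀ i, W i ≤ c ∨ W i ∈ Icc L U) {j : ℕ}
    (hKj : #{i | W i ≤ c} < j) (hj : j ≤ n) :
    L ≤ sortedOf W j := by
  have hnot : ¬ sortedOf W j ≤ c := by rw [sortedOf_le_iff W c (by omega : 1 ≤ j) hj]; omega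
  obtain ⟨i, hi⟩ := exists_sortedOf_eq W (j := j) (by omega)
  rw [hi] at hnot ⊢
  exact ((hW i).resolve_left hnot).1

lemma sum_sortedOf_Icc_le (hW : ∀ i, W i ≤ c ∨ W i ∈ Icc L U) (hcU : c ≤ U) {m : ℕ}
    (hKm : #{i | W i ≤ c} ≤ m) (hm : m ≤ n) :
    ∑ j ∈ Finset.Icc 1 m, sortedOf W j ≤ #{i | W i ≤ c} * c + (m - #{i | W i ≤ c}) * U := by
  set K := #{i | W i ≤ c}
  have hU : ∀ i, W i ≤ U := fun i => (hW i).elim hcU.trans' (·.2)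
  have hlow : ∑ j ∈ Finset.Ioc 0 K, sortedOf W j ≤ K * c := by
    simpa using sum_le_card_nsmul (Finset.Ioc 0 K) _ c fun j hj => by
      rw [Finset.mem_Ioc] at hj
      exact (sortedOf_le_iff W c hj.1 (by omega)).2 hj.2
  have hhigh : ∑ j ∈ Finset.Ioc K m, sortedOf W j ≤ (m - K) * U := by
    simpa [Nat.cast_sub hKm] using sum_le_card_nsmul (Finset.Ioc K m) _ U fun j hj => by
      rw [Finset.mem_Ioc] at hj
      exact sortedOf_le_of_forall_le hU (by omega)
  rw [show Finset.Icc 1 m = Finset.Ioc 0 m from Finset.Icc_add_one_left_eq_Ioc 0 m,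
    ← sum_Ioc_consecutive _ (Nat.zero_le K) hKm]
  linarith

lemma tail_mean_sub_sortedOf_succ_le (hW : ∀ i, W i ≤ c ∨ W i ∈ Icc L U) (hLU : L ≤ U)
    (hcU : c ≤ U) {m : ℕ} (hKm : #{i | W i ≤ c} < m) (hm : m ≤ n) :
    1 / ((n : ℝ) - m) * ∑ j ∈ Finset.Icc (m + 1) n, sortedOf W j - sortedOf W (m + 1) ≤ U - L := by
  rcases hm.eq_or_lt with rfl | hmn
  · simp [sortedOf_of_lt W (Nat.lt_succ_self m), hLU]
  have hU : ∀ i, W i ≤ U := fun i => (hW i).elim hcU.trans' (·.2)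
  have hpos : (0 : ℝ) < n - m := sub_pos.2 (by exact_mod_cast hmn)
  have hsum : ∑ j ∈ Finset.Icc (m + 1) n, sortedOf W j ≤ (n - m) * U := by
    simpa [Nat.cast_sub hmn.le] using sum_le_card_nsmul (Finset.Icc (m + 1) n) _ U
      fun j hj => sortedOf_le_of_forall_le hU (by rw [Finset.mem_Icc] at hj; omega)
  have hmean : 1 / ((n : ℝ) - m) * ∑ j ∈ Finset.Icc (m + 1) n, sortedOf W j ≤ U := by
    rw [one_div, inv_mul_le_iff₀ hpos]
    exact hsum
  linarith [le_sortedOf_of_card_lt hW (j := m + 1) (by omega) hmn]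

theorem ecf_nonpos_of_two_clusters (hW : ∀ i, W i ≤ c ∨ W i ∈ Icc L U)
    (hLU : L ≤ U) (hgap : 4 * (U - L) ≤ U - c)
    (hK : n ≤ 2 * #{i | W i ≤ c}) {m : ℕ} (hKm : #{i | W i ≤ c} < m) (hm : m ≤ n) :
    ecf n W m ≤ 0 := by
  set K := #{i | W i ≤ c}
  have hcU : c ≤ U := by linarith
  have hm₀ : (0 : ℝ) < m := by exact_mod_cast (Nat.zero_lt_of_lt hKm)
  have hmK : (m : ℝ) ≤ 2 * K := by exact_mod_cast hm.trans hK
  have hgap' : 2 * m * (U - L) ≤ K * (U - c) := by nlinarith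
  have hlower : 1 / (m : ℝ) * ∑ j ∈ Finset.Icc 1 m, sortedOf W j ≤ U - 2 * (U - L) := by
    rw [one_div, inv_mul_le_iff₀ hm₀]
    nlinarith [sum_sortedOf_Icc_le hW hcU hKm.le hm]
  have hupper := tail_mean_sub_sortedOf_succ_le hW hLU hcU hKm hm
  have hmth := le_sortedOf_of_card_lt hW hKm hm
  unfold ecf
  linarith

end TwoClusters

lemma hasSubgaussianMGF_id_gaussianReal (v : ℝ≥0) : HasSubgaussianMGF id v (gaussianReal 0 v) where
  integrable_exp_mul t := integrable_exp_mul_gaussianReal t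
  mgf_le t := by simp [mgf_id_gaussianReal]

lemma gaussianReal_abs_gt_le (v : ℝ≥0) {t : ℝ} (ht : 0 ≤ t) :
    gaussianReal 0 v {x | t < |x|} ≤ ENNReal.ofReal (2 * Real.exp (-t ^ 2 / (2 * v))) := by
  have hX := hasSubgaussianMGF_id_gaussianReal v
  have hsub : {x : ℝ | t < |x|} ⊆ {x | t ≤ id x} ∪ {x | t ≤ (-id) x} := fun x hx => by
    rcases le_total 0 x with h | h
    · exact Or.inl (by simp [abs_of_nonneg h] at hx ⊢; linarith)
    · exact Or.inr (by simp [abs_of_nonpos h] at hx ⊢; linarith)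
  rw [← ofReal_measureReal]
  gcongr
  calc (gaussianReal 0 v).real {x | t < |x|}
      ≤ (gaussianReal 0 v).real {x | t ≤ id x} + (gaussianReal 0 v).real {x | t ≤ (-id) x} :=
        (measureReal_mono hsub).trans (measureReal_union_le _ _)
    _ ≤ Real.exp (-t ^ 2 / (2 * v)) + Real.exp (-t ^ 2 / (2 * v)) :=
        add_le_add (hX.measure_ge_le ht) (hX.neg.measure_ge_le ht)
    _ = 2 * Real.exp (-t ^ 2 / (2 * v)) := by ring

lemma ae_eq_zero_or_eq_one_of_map_eq {Ω : Type*} [MeasurableSpace Ω] {μ : Measure Ω}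
    {X : Ω → ℝ} (hX : AEMeasurable X μ) {a b : ℝ≥0∞}
    (hlaw : μ.map X = a • Measure.dirac 0 + b • Measure.dirac 1) :
    ∀ᵐ ω ∂μ, X ω = 0 ∨ X ω = 1 := by
  refine ae_of_ae_map (p := fun x => x = 0 ∨ x = 1) hX ?_
  rw [hlaw, ae_add_measure_iff]
  constructor <;> exact Measure.ae_smul_measure (by simp) _

lemma measure_setOf_ne_zero_of_map_eq {Ω : Type*} [MeasurableSpace Ω] {μ : Measure Ω}
    {X : Ω → ℝ} (hX : Measurable X) {a b : ℝ≥0∞}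
    (hlaw : μ.map X = a • Measure.dirac 0 + b • Measure.dirac 1) :
    μ {ω | X ω ≠ 0} = b := by
  have hs : MeasurableSet ({0}ᶜ : Set ℝ) := (measurableSet_singleton 0).compl
  rw [show {ω | X ω ≠ 0} = X ⁻¹' {0}ᶜ from rfl, ← Measure.map_apply hX hs, hlaw]
  simp [Measure.dirac_apply' _ hs]

lemma meas_card_mem_ge_le_sum_div {ι Ω : Type*} [Fintype ι] [MeasurableSpace Ω] (μ : Measure Ω)
    {S : ι → Set Ω} (hS : ∀ i, MeasurableSet (S i)) {r : ℝ≥0∞} (hr₀ : r ≠ 0) (hr : r ≠ ∞) :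
    μ {ω | r ≤ #{i | ω ∈ S i}} ≤ (∑ i, μ (S i)) / r := by
  have hcount : ∀ ω, (#{i | ω ∈ S i} : ℝ≥0∞) = ∑ i, (S i).indicator 1 ω := fun ω => by
    simp [Set.indicator_apply]
  simp_rw [hcount]
  calc _ ≤ (∫⁻ ω, ∑ i, (S i).indicator 1 ω ∂μ) / r :=
        meas_ge_le_lintegral_div (by fun_prop (disch := exact hS _)) hr₀ hr
    _ = (∑ i, μ (S i)) / r := by
        rw [lintegral_finsetSum _ fun i _ => measurable_one.indicator (hS i)]
        simp_rw [lintegral_indicator_one (hS _)]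

lemma measure_lt_two_mul_card_le {Ω : Type*} [MeasurableSpace Ω] (μ : Measure Ω) {n : ℕ}
    {S : Fin n → Set Ω} (hS : ∀ i, MeasurableSet (S i)) {q : ℝ≥0∞} (hq : ∀ i, μ (S i) ≤ q) :
    μ {ω | n < 2 * #{i | ω ∈ S i}} ≤ 2 * q := by
  rcases n.eq_zero_or_pos with rfl | hn
  · simp
  have hn₀ : (n : ℝ≥0∞) / 2 ≠ 0 := by simp [hn.ne']
  have hn_top : (n : ℝ≥0∞) / 2 ≠ ∞ := by simp [ENNReal.div_eq_top]
  have hsub : {ω | n < 2 * #{i | ω ∈ S i}} ⊆ {ω | (n : ℝ≥0∞) / 2 ≤ #{i | ω ∈ S i}} :=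
    fun ω hω => by
      rw [Set.mem_ofPred_eq, ENNReal.div_le_iff_le_mul (by simp) (by simp), mul_comm]
      exact_mod_cast hω.le
  calc μ _ ≤ (∑ i, μ (S i)) / (n / 2) :=
        (measure_mono hsub).trans (meas_card_mem_ge_le_sum_div μ hS hn₀ hn_top)
    _ ≤ (n * q) / (n / 2) := by
        gcongr
        simpa using Finset.sum_le_card_nsmul univ _ q fun i _ => hq i
    _ = 2 * q := by
        rw [ENNReal.div_eq_inv_mul, ENNReal.inv_div (by simp) (by simp), ← mul_assoc,
          ENNReal.div_mul_cancel (by simp [hn.ne']) (by simp)]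

lemma measure_exists_abs_gt_le {Ω ι : Type*} [MeasurableSpace Ω] [Fintype ι] {μ : Measure Ω}
    {X : ι → Ω → ℝ} (hX : ∀ i, Measurable (X i)) {v : ℝ≥0}
    (hlaw : ∀ i, μ.map (X i) = gaussianReal 0 v) {t : ℝ} (ht : 0 ≤ t) :
    μ {ω | ∃ i, t < |X i ω|} ≤
      Fintype.card ι * ENNReal.ofReal (2 * Real.exp (-t ^ 2 / (2 * v))) := by
  have hs : MeasurableSet {x : ℝ | t < |x|} := measurableSet_lt measurable_const measurable_abs
  calc μ {ω | ∃ i, t < |X i ω|} = μ (⋃ i, X i ⁻¹' {x | t < |x|}) := by congr 1; ext; simp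
    _ ≤ ∑ i, μ (X i ⁻¹' {x | t < |x|}) := measure_iUnion_fintype_le _ _
    _ ≤ ∑ _i : ι, ENNReal.ofReal (2 * Real.exp (-t ^ 2 / (2 * v))) := by
        gcongr with i
        rw [← Measure.map_apply (hX i) hs, hlaw i]
        exact gaussianReal_abs_gt_le v ht
    _ = _ := by simp

lemma tendsto_natCast_mul_exp_neg_mul_atTop {b : ℝ} (hb : 0 < b) :
    Tendsto (fun n : ℕ => (n : ℝ) * Real.exp (-(b * n))) atTop (𝓝 0) := by
  simpa [Function.comp_def] using
    (tendsto_rpow_mul_exp_neg_mul_atTop_nhds_zero 1 b hb).comp tendsto_natCast_atTop_atTop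

lemma tendsto_measure_one_of_ae_mem {Ω : ℕ → Type*} [∀ n, MeasurableSpace (Ω n)]
    {P : ∀ n, Measure (Ω n)} [∀ n, IsProbabilityMeasure (P n)] {E B : ∀ n, Set (Ω n)}
    (hE : ∀ n, ∀ᵐ ω ∂P n, ω ∉ B n → ω ∈ E n) (hB : Tendsto (fun n => P n (B n)) atTop (𝓝 0)) :
    Tendsto (fun n => P n (E n)) atTop (𝓝 1) := by
  have hlower : ∀ n, 1 - P n (B n) ≤ P n (E n) := fun n => by
    have hcompl : P n (E n)ᶜ ≤ P n (B n) :=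
      measure_mono_ae ((hE n).mono fun ω h hω => not_not.1 (mt h hω))
    calc 1 - P n (B n) ≤ 1 - P n (E n)ᶜ := tsub_le_tsub_left hcompl 1
      _ ≤ P n (E n) := by
        rw [tsub_le_iff_right, ← measure_univ (μ := P n), ← Set.union_compl_self (E n)]
        exact measure_union_le _ _
  have hlim : Tendsto (fun n => 1 - P n (B n)) atTop (𝓝 1) := by
    simpa using ENNReal.Tendsto.sub tendsto_const_nhds hB (Or.inl ENNReal.one_ne_top)
  exact tendsto_of_tendsto_of_tendsto_of_le_of_le hlim tendsto_const_nhds hlower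
    fun n => prob_le_one

lemma ecf_nonpos_of_small_noise {n : ℕ} {a h : ℝ} (hh : 0 < h) {e ν : Fin n → ℝ}
    (he : ∀ i, |e i| ≤ h / 16) (hν : ∀ i, ν i = 0 ∨ ν i = 1) (hjumps : 2 * #{i | ν i ≠ 0} ≤ n)
    {m : ℕ} (hm : #{i | ν i = 0} < m) (hmn : m ≤ n) :
    ecf n (fun i => a + e i + h * ν i) m ≤ 0 := by
  have hcluster : ∀ i, (ν i = 0 → a + e i + h * ν i ≤ a + h / 16) ∧
      (ν i = 1 → a + e i + h * ν i ∈ Icc (a + h - h / 16) (a + h + h / 16)) := fun i => by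
    have := abs_le.1 (he i)
    refine ⟨fun h0 => ?_, fun h1 => ⟨?_, ?_⟩⟩ <;> simp only [*] <;> linarith
  have hcard : #{i | a + e i + h * ν i ≤ a + h / 16} = #{i | ν i = 0} := by
    refine congrArg card (filter_congr fun i _ => ⟨fun hle => ?_, (hcluster i).1⟩)
    refine (hν i).resolve_right fun h1 => ?_
    have := ((hcluster i).2 h1).1
    linarith
  have hsplit := card_filter_add_card_filter_not (s := univ) (fun i => ν i = 0)
  simp only [card_univ, Fintype.card_fin, ← ne_eq] at hsplit
  refine ecf_nonpos_of_two_clusters (fun i => (hν i).imp (hcluster i).1 (hcluster i).2)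
    (by linarith) (by linarith) ?_ (hcard ▸ hm) hmn
  rw [hcard]
  omega

lemma tendsto_measure_exists_abs_gt_mul_sqrt {Ω : ℕ → Type*} [∀ n, MeasurableSpace (Ω n)]
    {P : ∀ n, Measure (Ω n)} {X : ∀ n, Fin n → Ω n → ℝ} (hX : ∀ n i, Measurable (X n i))
    (hlaw : ∀ n i, (P n).map (X n i) = gaussianReal 0 1) {c : ℝ} (hc : 0 < c) :
    Tendsto (fun n => P n {ω | ∃ i, c * √n < |X n i ω|}) atTop (𝓝 0) := by
  have hbound : ∀ n, P n {ω | ∃ i, c * √n < |X n i ω|} ≤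
      ENNReal.ofReal (2 * (n * Real.exp (-(c ^ 2 / 2 * n)))) := fun n => by
    convert measure_exists_abs_gt_le (hX n) (hlaw n) (t := c * √n) (by positivity) using 1
    rw [mul_pow, Real.sq_sqrt n.cast_nonneg, Fintype.card_fin, ← ENNReal.ofReal_natCast,
      ← ENNReal.ofReal_mul n.cast_nonneg]
    congr 1
    push_cast
    ring_nf
  have hlim := ENNReal.tendsto_ofReal
    ((tendsto_natCast_mul_exp_neg_mul_atTop (b := c ^ 2 / 2) (by positivity)).const_mul 2)
  rw [mul_zero, ENNReal.ofReal_zero] at hlim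
  exact tendsto_of_tendsto_of_tendsto_of_le_of_le tendsto_const_nhds hlim (fun _ => bot_le) hbound

lemma tendsto_measure_lt_two_mul_card_ne_zero {Ω : ℕ → Type*} [∀ n, MeasurableSpace (Ω n)]
    {P : ∀ n, Measure (Ω n)} {N : ∀ n, Fin n → Ω n → ℝ} (hN : ∀ n i, Measurable (N n i))
    {a : ℕ → ℝ≥0∞} {lam : ℝ}
    (hlaw : ∀ n i, (P n).map (N n i) =
      a n • Measure.dirac 0 + ENNReal.ofReal (lam / n) • Measure.dirac 1) :
    Tendsto (fun n => P n {ω | n < 2 * #{i | N n i ω ≠ 0}}) atTop (𝓝 0) := by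
  have hbound : ∀ n, P n {ω | n < 2 * #{i | N n i ω ≠ 0}} ≤ 2 * ENNReal.ofReal (lam / n) :=
    fun n => by
      convert measure_lt_two_mul_card_le _ (S := fun i => {ω | N n i ω ≠ 0})
        (fun i => hN n i (measurableSet_singleton 0).compl)
        fun i => (measure_setOf_ne_zero_of_map_eq (hN n i) (hlaw n i)).le
  have hlim := ENNReal.Tendsto.const_mul (a := 2)
    (ENNReal.tendsto_ofReal (tendsto_const_div_atTop_nhds_zero_nat lam)) (Or.inr (by simp))
  rw [ENNReal.ofReal_zero, mul_zero] at hlim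
  exact tendsto_of_tendsto_of_tendsto_of_le_of_le tendsto_const_nhds hlim (fun _ => bot_le) hbound

theorem stmt6_general (lam μc σ h : ℝ) (hσ : 0 < σ) (hh : 0 < h)
    (Ω : ℕ → Type*) [∀ n, MeasurableSpace (Ω n)] (P : ∀ n, Measure (Ω n))
    [∀ n, IsProbabilityMeasure (P n)]
    (Z N : ∀ n : ℕ, Fin n → Ω n → ℝ)
    (hmeasZ : ∀ n i, Measurable (Z n i)) (hmeasN : ∀ n i, Measurable (N n i))
    (hZ : ∀ n i, Measure.map (Z n i) (P n) = gaussianReal 0 1)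
    (hN : ∀ n i, Measure.map (N n i) (P n) =
      ENNReal.ofReal (1 - lam / n) • Measure.dirac (0 : ℝ) +
        ENNReal.ofReal (lam / n) • Measure.dirac (1 : ℝ)) :
    Tendsto
      (fun n : ℕ => P n {ω | ∀ k : ℕ,
        (Finset.univ.filter fun i : Fin n => N n i ω = 0).card + 1 ≤ k → k ≤ n - 1 →
        ecf n (fun i : Fin n => μc / n + (σ / Real.sqrt n) * Z n i ω + h * N n i ω)
          (k + 1) ≤ 0})
      atTop (nhds 1) := by
  set c := h / (16 * σ)
  have hc : 0 < c := by positivity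
  refine tendsto_measure_one_of_ae_mem (B := fun n =>
    {ω | n < 2 * #{i | N n i ω ≠ 0}} ∪ {ω | ∃ i, c * √n < |Z n i ω|}) (fun n => ?_) ?_
  · filter_upwards [ae_all_iff.2 fun i =>
      ae_eq_zero_or_eq_one_of_map_eq (hmeasN n i).aemeasurable (hN n i)]
      with ω hN01 hgood k hk hkn
    simp only [Set.mem_union, Set.mem_ofPred_eq, not_or, not_lt, not_exists] at hgood
    refine ecf_nonpos_of_small_noise hh (fun i => ?_) hN01 hgood.1 (by omega) (by omega)
    have hn : 0 < √n := Real.sqrt_pos.2 (by exact_mod_cast i.pos)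
    calc |σ / √n * Z n i ω| = σ / √n * |Z n i ω| := by rw [abs_mul, abs_of_pos (by positivity)]
      _ ≤ σ / √n * (c * √n) := by gcongr; exact hgood.2 i
      _ = h / 16 := by simp only [c]; field_simp
  · have hlim := (tendsto_measure_lt_two_mul_card_ne_zero hmeasN hN).add
      (tendsto_measure_exists_abs_gt_mul_sqrt hmeasZ hZ hc)
    rw [add_zero] at hlim
    exact tendsto_of_tendsto_of_tendsto_of_le_of_le tendsto_const_nhds hlim (fun _ => bot_le)
      fun n => measure_union_le _ _

/-- In the triangular array `W_i = μ/n + (σ/√n) Z_i + h N_i` with `Z_i` i.i.d.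
standard normal and `N_i` i.i.d. Bernoulli(λ/n) independent of the `Z_i`, and
`k* = #{i : N_i = 0}`, the probability that `G_n(k/n) ≤ 0` for every integer
`k* + 1 ≤ k ≤ n - 1` tends to one. (Recall `G_n(k/n) = ecf n W (k+1)`.) -/
theorem stmt6 (lam μc σ h : ℝ) (hlam : 0 < lam) (hσ : 0 < σ) (hh : 0 < h)
    (Ω : ℕ → Type*) [∀ n, MeasurableSpace (Ω n)] (P : ∀ n, Measure (Ω n))
    [∀ n, IsProbabilityMeasure (P n)]
    (Z N : ∀ n : ℕ, Fin n → Ω n → ℝ)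
    (hmeasZ : ∀ n i, Measurable (Z n i)) (hmeasN : ∀ n i, Measurable (N n i))
    -- all `2n` variables `Z_1,…,Z_n,N_1,…,N_n` are mutually independent
    (hindep : ∀ n, iIndepFun (Sum.elim (Z n) (N n)) (P n))
    (hZ : ∀ n i, Measure.map (Z n i) (P n) = gaussianReal 0 1)
    (hN : ∀ n i, Measure.map (N n i) (P n) =
      ENNReal.ofReal (1 - lam / n) • Measure.dirac (0 : ℝ) +
        ENNReal.ofReal (lam / n) • Measure.dirac (1 : ℝ)) :
    Tendsto
      (fun n : ℕ => P n {ω | ∀ k : ℕ,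
        (Finset.univ.filter fun i : Fin n => N n i ω = 0).card + 1 ≤ k → k ≤ n - 1 →
        ecf n (fun i : Fin n => μc / n + (σ / Real.sqrt n) * Z n i ω + h * N n i ω)
          (k + 1) ≤ 0})
      atTop (nhds 1) :=
  stmt6_general lam μc σ h hσ hh Ω P Z N hmeasZ hmeasN hZ hN
end

section
/- Let W be a real random variable with distribution function F satisfying assumptions A1–A3 and E[|W|] < ∞. Then the cross-over function G is differentiable at every p ∈ (0,1) with G'(p) = (1/p)[Q(p) − (1/p)E[W·1_{W ≤ Q(p)}]] − (1/(1−p))[Q(p) − (1/(1−p))E[W·1_{W > Q(p)}]] − 2Q'(p). -/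
/-! Write `L s = ∫ x in Iic (Q s), x ∂μ`. For `a ≤ b` the slab `Ioc (Q a) (Q b)` has mass `b - a`,
and on it `x` stays within `Q b - Q a` of any `c ∈ [Q a, Q b]`, so
`|L b - L a - (b - a) * c| ≤ (Q b - Q a) * (b - a)`. Taking `c = Q p`, continuity of `Q` at `p`
gives `L' p = Q p`. The upper-tail integral is `∫ x ∂μ - L`, so its derivative is `-Q p`, and the
formula for `G'` follows from the product rule. -/

open MeasureTheory Filter Set

/-- The cross-over function
`G(p) = (1/p) E[W 1_{W ≤ Q(p)}] + (1/(1-p)) E[W 1_{W > Q(p)}] - 2 Q(p)`. -/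
noncomputable def crossOver (μ : Measure ℝ) (Q : ℝ → ℝ) (p : ℝ) : ℝ :=
  (1 / p) * ∫ x in Iic (Q p), x ∂μ + (1 / (1 - p)) * ∫ x in Ioi (Q p), x ∂μ - 2 * Q p

open scoped Topology

lemma abs_setIntegral_Ioc_sub_mul_le {μ : Measure ℝ} {u v c : ℝ} (hμ : μ (Ioc u v) ≠ ⊤)
    (huc : u ≤ c) (hcv : c ≤ v) :
    |∫ x in Ioc u v, x ∂μ - μ.real (Ioc u v) * c| ≤ (v - u) * μ.real (Ioc u v) := by
  have hid : IntegrableOn (fun x : ℝ => x) (Ioc u v) μ :=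
    Measure.integrableOn_of_bounded (M := |u| + |v|) hμ aestronglyMeasurable_id <|
      (ae_restrict_mem measurableSet_Ioc).mono fun x hx => by
        simp only [Real.norm_eq_abs, abs_le]
        constructor <;> cases abs_cases u <;> cases abs_cases v <;> linarith [hx.1, hx.2]
  have hcentre : ∫ x in Ioc u v, x ∂μ - μ.real (Ioc u v) * c = ∫ x in Ioc u v, (x - c) ∂μ := by
    rw [integral_sub hid (integrableOn_const hμ), setIntegral_const, smul_eq_mul]
  rw [hcentre, ← Real.norm_eq_abs]
  refine norm_setIntegral_le_of_norm_le_const hμ.lt_top fun x hx => ?_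
  rw [Real.norm_eq_abs, abs_le]
  constructor <;> linarith [hx.1, hx.2]

section Quantile

variable {μ : Measure ℝ} {Q : ℝ → ℝ}

lemma measure_Iic_quantile_ne_top (hQF : ∀ t ∈ Ioo (0 : ℝ) 1, (μ (Iic (Q t))).toReal = t)
    {t : ℝ} (ht : t ∈ Ioo (0 : ℝ) 1) : μ (Iic (Q t)) ≠ ⊤ :=
  (ENNReal.toReal_ne_zero.mp ((hQF t ht).symm ▸ ht.1.ne')).2

lemma strictMonoOn_quantile
    (hQF : ∀ t ∈ Ioo (0 : ℝ) 1, (μ (Iic (Q t))).toReal = t) : StrictMonoOn Q (Ioo 0 1) := by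
  intro a ha b hb hab
  by_contra! hle
  have := ENNReal.toReal_mono (measure_Iic_quantile_ne_top hQF ha)
    (measure_mono (Iic_subset_Iic.mpr hle))
  rw [hQF a ha, hQF b hb] at this
  linarith

lemma measure_Ioc_quantile_ne_top_and_measureReal_eq
    (hQF : ∀ t ∈ Ioo (0 : ℝ) 1, (μ (Iic (Q t))).toReal = t) {a b : ℝ}
    (ha : a ∈ Ioo (0 : ℝ) 1) (hb : b ∈ Ioo (0 : ℝ) 1) (hab : a ≤ b) :
    μ (Ioc (Q a) (Q b)) ≠ ⊤ ∧ μ.real (Ioc (Q a) (Q b)) = b - a := by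
  have hQ : Q a ≤ Q b := (strictMonoOn_quantile hQF).monotoneOn ha hb hab
  have hIoc : μ (Ioc (Q a) (Q b)) ≠ ⊤ :=
    ((measure_mono Ioc_subset_Iic_self).trans_lt (measure_Iic_quantile_ne_top hQF hb).lt_top).ne
  refine ⟨hIoc, ?_⟩
  have hunion := measureReal_union (Iic_disjoint_Ioc le_rfl) measurableSet_Ioc
    (measure_Iic_quantile_ne_top hQF ha) hIoc
  rw [Iic_union_Ioc_eq_Iic hQ, measureReal_def, measureReal_def, hQF a ha, hQF b hb] at hunion
  linarith

lemma abs_setIntegral_Iic_quantile_sub_mul_le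
    (hQF : ∀ t ∈ Ioo (0 : ℝ) 1, (μ (Iic (Q t))).toReal = t) (hint : Integrable (fun x => x) μ)
    {a b c : ℝ} (ha : a ∈ Ioo (0 : ℝ) 1) (hb : b ∈ Ioo (0 : ℝ) 1) (hab : a ≤ b)
    (hac : Q a ≤ c) (hcb : c ≤ Q b) :
    |∫ x in Iic (Q b), x ∂μ - ∫ x in Iic (Q a), x ∂μ - (b - a) * c| ≤ (Q b - Q a) * (b - a) := by
  obtain ⟨hfin, hreal⟩ := measure_Ioc_quantile_ne_top_and_measureReal_eq hQF ha hb hab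
  rw [intervalIntegral.integral_Iic_sub_Iic hint.integrableOn hint.integrableOn,
    intervalIntegral.integral_of_le (hac.trans hcb), ← hreal]
  exact abs_setIntegral_Ioc_sub_mul_le hfin hac hcb

lemma abs_setIntegral_Iic_quantile_sub_mul_le_abs_mul
    (hQF : ∀ t ∈ Ioo (0 : ℝ) 1, (μ (Iic (Q t))).toReal = t) (hint : Integrable (fun x => x) μ)
    {p s : ℝ} (hp : p ∈ Ioo (0 : ℝ) 1) (hs : s ∈ Ioo (0 : ℝ) 1) :
    |∫ x in Iic (Q s), x ∂μ - ∫ x in Iic (Q p), x ∂μ - (s - p) * Q p| ≤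
      |Q s - Q p| * |s - p| := by
  have hQ := (strictMonoOn_quantile hQF).monotoneOn
  rcases le_total s p with hsp | hps
  · have h := abs_setIntegral_Iic_quantile_sub_mul_le hQF hint hs hp hsp (hQ hs hp hsp) le_rfl
    rw [abs_sub_comm (Q s), abs_sub_comm s, abs_of_nonneg (sub_nonneg.mpr (hQ hs hp hsp)),
      abs_of_nonneg (sub_nonneg.mpr hsp), ← abs_neg]
    convert h using 2
    ring
  · have h := abs_setIntegral_Iic_quantile_sub_mul_le hQF hint hp hs hps le_rfl (hQ hp hs hps)
    rwa [abs_of_nonneg (sub_nonneg.mpr (hQ hp hs hps)), abs_of_nonneg (sub_nonneg.mpr hps)]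

theorem hasDerivAt_setIntegral_Iic_quantile
    (hQF : ∀ t ∈ Ioo (0 : ℝ) 1, (μ (Iic (Q t))).toReal = t) (hint : Integrable (fun x => x) μ)
    {p : ℝ} (hp : p ∈ Ioo (0 : ℝ) 1) (hQp : ContinuousAt Q p) :
    HasDerivAt (fun s => ∫ x in Iic (Q s), x ∂μ) (Q p) p := by
  rw [hasDerivAt_iff_isLittleO]
  have hbound : (fun s => ∫ x in Iic (Q s), x ∂μ - ∫ x in Iic (Q p), x ∂μ - (s - p) • Q p)
      =O[𝓝 p] fun s => (Q s - Q p) * (s - p) := by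
    refine Asymptotics.IsBigO.of_bound 1 ?_
    filter_upwards [isOpen_Ioo.mem_nhds hp] with s hs
    simpa [abs_mul] using abs_setIntegral_Iic_quantile_sub_mul_le_abs_mul hQF hint hp hs
  have hQo : (fun s => Q s - Q p) =o[𝓝 p] fun _ => (1 : ℝ) :=
    (Asymptotics.isLittleO_one_iff ℝ).mpr (tendsto_sub_nhds_zero_iff.mpr hQp.tendsto)
  simpa using hbound.trans_isLittleO (hQo.mul_isBigO (Asymptotics.isBigO_refl (· - p) _))

end Quantile

theorem stmt12_general (μ : Measure ℝ) (Q : ℝ → ℝ)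
    -- A1
    (hQF : ∀ p ∈ Ioo (0 : ℝ) 1, (μ (Iic (Q p))).toReal = p)
    -- A3
    (hQsmooth : ∀ p ∈ Ioo (0 : ℝ) 1, ContDiffAt ℝ 2 Q p)
    -- integrability: E|W| < ∞
    (hint : Integrable (fun x => x) μ) :
    ∀ p ∈ Ioo (0 : ℝ) 1,
      HasDerivAt (crossOver μ Q)
        ((1 / p) * (Q p - (1 / p) * ∫ x in Iic (Q p), x ∂μ)
          - (1 / (1 - p)) * (Q p - (1 / (1 - p)) * ∫ x in Ioi (Q p), x ∂μ)
          - 2 * deriv Q p) p := by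
  intro p hp
  have hlower := hasDerivAt_setIntegral_Iic_quantile hQF hint hp (hQsmooth p hp).continuousAt
  have hupper : HasDerivAt (fun s => ∫ x in Ioi (Q s), x ∂μ) (-Q p) p := by
    simp_rw [← compl_Iic, setIntegral_compl measurableSet_Iic hint]
    exact hlower.const_sub _
  have hQ : HasDerivAt Q (deriv Q p) p :=
    ((hQsmooth p hp).differentiableAt two_ne_zero).hasDerivAt
  have hp0 : p ≠ 0 := hp.1.ne'
  have h1p : 1 - p ≠ 0 := sub_ne_zero.mpr hp.2.ne'
  have hinv : HasDerivAt (fun s : ℝ => 1 / s) (-(1 / p ^ 2)) p := by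
    simpa only [one_div] using hasDerivAt_inv hp0
  have hinv' : HasDerivAt (fun s : ℝ => 1 / (1 - s)) (1 / (1 - p) ^ 2) p := by
    simpa [one_div] using ((hasDerivAt_id' p).const_sub 1).fun_inv h1p
  refine (((hinv.fun_mul hlower).fun_add (hinv'.fun_mul hupper)).fun_sub
    (hQ.const_mul 2)).congr_deriv ?_
  field_simp
  ring

/-- Under A1–A3 and `E|W| < ∞`, the cross-over function `G` is differentiable
at every `p ∈ (0,1)` with
`G'(p) = (1/p)[Q(p) - (1/p)E[W 1_{W ≤ Q(p)}]] - (1/(1-p))[Q(p) - (1/(1-p))E[W 1_{W > Q(p)}]]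
 - 2 Q'(p)`. -/
theorem stmt12 (μ : Measure ℝ) (f Q : ℝ → ℝ)
    -- A1
    (hf : ∀ x, 0 ≤ f x)
    (hdens : μ = volume.withDensity fun x => ENNReal.ofReal (f x))
    (hQF : ∀ p ∈ Ioo (0 : ℝ) 1, (μ (Iic (Q p))).toReal = p)
    (hQuniq : ∀ p ∈ Ioo (0 : ℝ) 1, ∀ x : ℝ, (μ (Iic x)).toReal = p → x = Q p)
    -- A2
    (hmean : ∫ x, x ∂μ = 0)
    (hvar : ∫ x, x ^ 2 ∂μ = 1)
    -- A3
    (hQsmooth : ∀ p ∈ Ioo (0 : ℝ) 1, ContDiffAt ℝ 2 Q p)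
    -- integrability: E|W| < ∞
    (hint : Integrable (fun x => x) μ) :
    ∀ p ∈ Ioo (0 : ℝ) 1,
      HasDerivAt (crossOver μ Q)
        ((1 / p) * (Q p - (1 / p) * ∫ x in Iic (Q p), x ∂μ)
          - (1 / (1 - p)) * (Q p - (1 / (1 - p)) * ∫ x in Ioi (Q p), x ∂μ)
          - 2 * deriv Q p) p :=
  stmt12_general μ Q hQF hQsmooth hint
end
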